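/- Reversal under replication for IRBD: with k ∈ (0,1), if A and B are sorted profiles of the same length with min(A) > min(B), then however much W(B) exceeds W(A) initially, there exists λ₀ such that for all λ ≥ λ₀, W(A^λ) > W(B^λ), where W is the rank-discounted welfare W(X) = Σ_i k^{i−1} x_{(i)} applied to λ-fold replications. -/
import Mathlib


open Finset Filter

/-- Rank-discounted welfare of the λ-fold replication of the sorted profile u. -/
noncomputable def Wrep (n : ℕ) (u : Fin n → ℝ) (k : ℝ) (lam : ℕ) : ℝ :=
  ∑ j : Fin n, k ^ ((j : ℕ) * lam) * u j * (∑ t ∈ Finset.range lam, k ^ t)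

/-- If the worst-off in A is better off than the worst-off in B, then for all
sufficiently large replication factors λ, the IRBD welfare of A^λ exceeds that of
B^λ — regardless of the initial ranking. -/
theorem irbd_replication_reversal (n : ℕ) (hn : 1 ≤ n)
    (A B : Fin n → ℝ) (hA : Monotone A) (hB : Monotone B)
    (k : ℝ) (hk0 : 0 < k) (hk1 : k < 1)
    (hmin : A ⟨0, by omega⟩ > B ⟨0, by omega⟩) :
    ∃ lam₀ : ℕ, ∀ lam ≥ lam₀, Wrep n A k lam > Wrep n B k lam := by
  set a0 : Fin n := ⟨0, by omega⟩ with ha0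
  set f : ℕ → ℝ := fun lam => ∑ j : Fin n, k ^ ((j : ℕ) * lam) * (A j - B j) with hf
  have hlim : Tendsto f atTop (nhds (A a0 - B a0)) := by
    have h1 : Tendsto f atTop
        (nhds (∑ j : Fin n, if (j : ℕ) = 0 then A j - B j else 0)) := by
      apply tendsto_finset_sum
      intro j _
      by_cases hj : (j : ℕ) = 0
      · simp only [hj, if_pos, Nat.zero_mul, pow_zero, one_mul]
        exact tendsto_const_nhds
      · simp only [hj, if_neg, not_false_iff]
        have hkj : |(k : ℝ) ^ (j : ℕ)| < 1 := by
          rw [abs_of_nonneg (le_of_lt (pow_pos hk0 _))]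
          exact pow_lt_one₀ hk0.le hk1 hj
        have h0 : Tendsto (fun lam : ℕ => (k ^ (j : ℕ)) ^ lam) atTop (nhds 0) :=
          tendsto_pow_atTop_nhds_zero_of_abs_lt_one hkj
        have := h0.mul_const (A j - B j)
        simp only [zero_mul] at this
        convert this using 2 with lam
        rw [← pow_mul]
    have h2 : (∑ j : Fin n, if (j : ℕ) = 0 then A j - B j else 0) = A a0 - B a0 := by
      have : ∀ j : Fin n, ((j : ℕ) = 0 ↔ j = a0) := by
        intro j; constructor
        · intro h; exact Fin.ext h
        · intro h; rw [h]
      rw [Finset.sum_congr rfl (fun j _ => by rw [if_congr (this j) rfl rfl])]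
      simp
    rwa [h2] at h1
  have hpos : ∀ᶠ lam in atTop, 0 < f lam :=
    hlim.eventually (eventually_gt_nhds (by linarith))
  obtain ⟨N, hN⟩ := eventually_atTop.mp hpos
  refine ⟨max N 1, fun lam hlam => ?_⟩
  have hlamN : N ≤ lam := le_trans (le_max_left _ _) hlam
  have hlam1 : 1 ≤ lam := le_trans (le_max_right _ _) hlam
  have hG : 0 < ∑ t ∈ Finset.range lam, k ^ t := by
    apply Finset.sum_pos (fun t _ => pow_pos hk0 t)
    exact ⟨0, Finset.mem_range.mpr (by omega)⟩
  have hfl : 0 < f lam := hN lam hlamN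
  have key : Wrep n A k lam - Wrep n B k lam = f lam * (∑ t ∈ Finset.range lam, k ^ t) := by
    simp only [Wrep, hf, ← Finset.sum_sub_distrib, Finset.sum_mul]
    exact Finset.sum_congr rfl (fun j _ => by ring)
  have := mul_pos hfl hG
  linarith [key]
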